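/- arXiv:2111.13447 — 3 statements merged into one kernel-verified Lean document; each statement's English description precedes it below -/
import Mathlib

section
/- Let U be a finite set, T a left-continuous t-norm with residual implicator I, and R : U × U → [0,1] a reflexive fuzzy relation. A fuzzy set A : U → [0,1] satisfies A(v) = max over u ∈ U of T(R(v,u), A(u)) for all v ∈ U (i.e., A is granularly representable) if and only if for all u, v ∈ U, R(v,u) ≤ I(A(u), A(v)), which in turn is equivalent to: for all u, v ∈ U, T(R(v,u), A(u)) ≤ A(v). -/
open Set

/-- A t-norm on the unit interval (modeled as a real binary operation whose
relevant properties hold on `[0,1]`). -/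
def IsTNorm (T : ℝ → ℝ → ℝ) : Prop :=
  (∀ x ∈ Icc (0:ℝ) 1, ∀ y ∈ Icc (0:ℝ) 1, T x y ∈ Icc (0:ℝ) 1) ∧
  (∀ x y : ℝ, T x y = T y x) ∧
  (∀ x y z : ℝ, T (T x y) z = T x (T y z)) ∧
  (∀ x ∈ Icc (0:ℝ) 1, ∀ y ∈ Icc (0:ℝ) 1, ∀ z ∈ Icc (0:ℝ) 1, y ≤ z → T x y ≤ T x z) ∧
  (∀ x ∈ Icc (0:ℝ) 1, T x 1 = x)

/-- Left continuity of a t-norm (in each argument; by commutativity it suffices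
to require it in the second argument). -/
def LeftContinuousTNorm (T : ℝ → ℝ → ℝ) : Prop :=
  ∀ x ∈ Icc (0:ℝ) 1, ∀ y ∈ Icc (0:ℝ) 1, ContinuousWithinAt (fun z => T x z) (Iic y) y

/-- The residual implicator `I(x,y) = sup {λ ∈ [0,1] : T(x,λ) ≤ y}`. -/
noncomputable def resImp (T : ℝ → ℝ → ℝ) (x y : ℝ) : ℝ :=
  sSup {l : ℝ | l ∈ Icc (0:ℝ) 1 ∧ T x l ≤ y}

/-!
Left continuity of `T` makes the supremum defining `I(x, y)` attained, which gives the
residuation law `T(x, λ) ≤ y ↔ λ ≤ I(x, y)`; this turns the second equivalence into a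
restatement. For the first, reflexivity makes the term `u = v` of the maximum equal to
`T(1, A v) = A v`, so the maximum equals `A v` exactly when every term is at most `A v`.
-/

theorem eq_ciSup_iff_forall_le_of_apply_eq {ι α : Type*} [ConditionallyCompleteLattice α]
    {f : ι → α} {a : α} (hf : BddAbove (range f)) {i : ι} (hi : f i = a) :
    a = ⨆ j, f j ↔ ∀ j, f j ≤ a := by
  have : Nonempty ι := ⟨i⟩
  refine ⟨fun h j => h ▸ le_ciSup hf j, fun h => le_antisymm ?_ (ciSup_le h)⟩
  exact hi ▸ le_ciSup hf i

namespace IsTNorm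

variable {T : ℝ → ℝ → ℝ} (hT : IsTNorm T)
include hT

theorem apply_one_left {x : ℝ} (hx : x ∈ Icc (0:ℝ) 1) : T 1 x = x := by
  rw [hT.2.1, hT.2.2.2.2 x hx]

theorem apply_zero_right {x : ℝ} (hx : x ∈ Icc (0:ℝ) 1) : T x 0 = 0 := by
  have h0 : (0:ℝ) ∈ Icc (0:ℝ) 1 := left_mem_Icc.2 zero_le_one
  have h1 : (1:ℝ) ∈ Icc (0:ℝ) 1 := right_mem_Icc.2 zero_le_one
  refine le_antisymm ?_ (hT.1 x hx 0 h0).1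
  calc T x 0 = T 0 x := hT.2.1 x 0
    _ ≤ T 0 1 := hT.2.2.2.1 0 h0 x hx 1 h1 hx.2
    _ = 0 := hT.2.2.2.2 0 h0

theorem zero_mem_resImp_set {x y : ℝ} (hx : x ∈ Icc (0:ℝ) 1) (hy : y ∈ Icc (0:ℝ) 1) :
    (0:ℝ) ∈ {l : ℝ | l ∈ Icc (0:ℝ) 1 ∧ T x l ≤ y} :=
  ⟨left_mem_Icc.2 zero_le_one, (hT.apply_zero_right hx).trans_le hy.1⟩

theorem resImp_mem_Icc {x y : ℝ} (hx : x ∈ Icc (0:ℝ) 1) (hy : y ∈ Icc (0:ℝ) 1) :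
    resImp T x y ∈ Icc (0:ℝ) 1 :=
  ⟨le_csSup ⟨1, fun _ hl => hl.1.2⟩ (hT.zero_mem_resImp_set hx hy),
    csSup_le ⟨0, hT.zero_mem_resImp_set hx hy⟩ fun _ hl => hl.1.2⟩

theorem apply_resImp_le (hLC : LeftContinuousTNorm T) {x y : ℝ}
    (hx : x ∈ Icc (0:ℝ) 1) (hy : y ∈ Icc (0:ℝ) 1) : T x (resImp T x y) ≤ y := by
  set S := {l : ℝ | l ∈ Icc (0:ℝ) 1 ∧ T x l ≤ y}
  have hbdd : BddAbove S := ⟨1, fun _ hl => hl.1.2⟩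
  have hsup_mem : sSup S ∈ closure S := csSup_mem_closure ⟨0, hT.zero_mem_resImp_set hx hy⟩ hbdd
  have hcont : ContinuousWithinAt (T x) S (sSup S) :=
    (hLC x hx _ (hT.resImp_mem_Icc hx hy)).mono fun _ hl => le_csSup hbdd hl
  have himage : T x '' S ⊆ Iic y := by
    rintro _ ⟨l, hl, rfl⟩
    exact hl.2
  exact closure_minimal himage isClosed_Iic (hcont.mem_closure_image hsup_mem)

theorem le_resImp_iff (hLC : LeftContinuousTNorm T) {x y l : ℝ}
    (hx : x ∈ Icc (0:ℝ) 1) (hy : y ∈ Icc (0:ℝ) 1) (hl : l ∈ Icc (0:ℝ) 1) :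
    l ≤ resImp T x y ↔ T x l ≤ y :=
  ⟨fun h => (hT.2.2.2.1 x hx l hl _ (hT.resImp_mem_Icc hx hy) h).trans
      (hT.apply_resImp_le hLC hx hy),
    fun h => le_csSup ⟨1, fun _ hm => hm.1.2⟩ ⟨hl, h⟩⟩

end IsTNorm

theorem granular_representability_characterization_general
    (U : Type*) [Fintype U]
    (T : ℝ → ℝ → ℝ) (hT : IsTNorm T) (hLC : LeftContinuousTNorm T)
    (R : U → U → ℝ) (hR : ∀ u v, R u v ∈ Icc (0:ℝ) 1)
    (hRrefl : ∀ u, R u u = 1)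
    (A : U → ℝ) (hA : ∀ u, A u ∈ Icc (0:ℝ) 1) :
    ((∀ v, A v = ⨆ u, T (R v u) (A u)) ↔
      (∀ u v, R v u ≤ resImp T (A u) (A v))) ∧
    ((∀ u v, R v u ≤ resImp T (A u) (A v)) ↔
      (∀ u v, T (R v u) (A u) ≤ A v)) := by
  have residuation : (∀ u v, R v u ≤ resImp T (A u) (A v)) ↔
      ∀ u v, T (R v u) (A u) ≤ A v := by
    refine forall₂_congr fun u v => ?_
    rw [hT.le_resImp_iff hLC (hA u) (hA v) (hR v u), hT.2.1]
  have representable : (∀ v, A v = ⨆ u, T (R v u) (A u)) ↔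
      ∀ u v, T (R v u) (A u) ≤ A v := by
    rw [forall_comm]
    refine forall_congr' fun v => eq_ciSup_iff_forall_le_of_apply_eq
      (finite_range _).bddAbove (i := v) ?_
    rw [hRrefl, hT.apply_one_left (hA v)]
  exact ⟨representable.trans residuation.symm, residuation⟩

theorem granular_representability_characterization
    (U : Type*) [Fintype U] [Nonempty U]
    (T : ℝ → ℝ → ℝ) (hT : IsTNorm T) (hLC : LeftContinuousTNorm T)
    (R : U → U → ℝ) (hR : ∀ u v, R u v ∈ Icc (0:ℝ) 1)
    (hRrefl : ∀ u, R u u = 1)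
    (A : U → ℝ) (hA : ∀ u, A u ∈ Icc (0:ℝ) 1) :
    ((∀ v, A v = ⨆ u, T (R v u) (A u)) ↔
      (∀ u v, R v u ≤ resImp T (A u) (A v))) ∧
    ((∀ u v, R v u ≤ resImp T (A u) (A v)) ↔
      (∀ u v, T (R v u) (A u) ≤ A v)) :=
  granular_representability_characterization_general U T hT hLC R hR hRrefl A hA
end

section
/- Let U be a finite set, T a left-continuous t-norm with residual implicator I, R : U × U → [0,1] a reflexive and T-transitive fuzzy relation, and A : U → [0,1] a fuzzy set. Define the lower approximation apr(A)(u) = min over v ∈ U of I(R(v,u), A(v)). Then apr(A) is the largest granularly representable fuzzy set contained in A; that is: (1) apr(A)(u) ≤ A(u) for all u; (2) apr(A) satisfies T(R(v,u), apr(A)(u)) ≤ apr(A)(v) for all u, v; and (3) any fuzzy set B with T(R(v,u), B(u)) ≤ B(v) for all u, v and B ≤ A pointwise satisfies B ≤ apr(A) pointwise. -/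
/-!
Left continuity makes the residual implicator a right adjoint of the t-norm on `[0,1]`:
`l ≤ I(x, y) ↔ T(x, l) ≤ y`. Hence `a ≤ apr(A)(u)` exactly when `T(R(v,u), a) ≤ A(v)` for every `v`.
Applied to `a = apr(A)(u)` itself this gives `apr(A) ≤ A` by reflexivity, and, after regrouping
`T(R(w,v), T(R(v,u), a))` by associativity, granularity by T-transitivity; for a granular `B ≤ A`
the criterion holds with `a = B(u)`.
-/

open Set

namespace IsTNorm

variable {T : ℝ → ℝ → ℝ} {x y z : ℝ}

theorem mem_Icc (hT : IsTNorm T) (hx : x ∈ Icc (0:ℝ) 1) (hy : y ∈ Icc (0:ℝ) 1) :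
    T x y ∈ Icc (0:ℝ) 1 :=
  hT.1 x hx y hy

theorem comm (hT : IsTNorm T) (x y : ℝ) : T x y = T y x := hT.2.1 x y

theorem assoc (hT : IsTNorm T) (x y z : ℝ) : T (T x y) z = T x (T y z) := hT.2.2.1 x y z

theorem mono_right (hT : IsTNorm T) (hx : x ∈ Icc (0:ℝ) 1) (hy : y ∈ Icc (0:ℝ) 1)
    (hz : z ∈ Icc (0:ℝ) 1) (hyz : y ≤ z) : T x y ≤ T x z :=
  hT.2.2.2.1 x hx y hy z hz hyz

theorem mono_left (hT : IsTNorm T) (hx : x ∈ Icc (0:ℝ) 1) (hy : y ∈ Icc (0:ℝ) 1)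
    (hz : z ∈ Icc (0:ℝ) 1) (hxy : x ≤ y) : T x z ≤ T y z := by
  rw [hT.comm x, hT.comm y]
  exact hT.mono_right hz hx hy hxy

theorem one_left (hT : IsTNorm T) (hx : x ∈ Icc (0:ℝ) 1) : T 1 x = x := by
  rw [hT.comm]
  exact hT.2.2.2.2 x hx

theorem zero_right (hT : IsTNorm T) (hx : x ∈ Icc (0:ℝ) 1) : T x 0 = 0 := by
  have h0 : (0:ℝ) ∈ Icc (0:ℝ) 1 := left_mem_Icc.2 zero_le_one
  have h1 : (1:ℝ) ∈ Icc (0:ℝ) 1 := right_mem_Icc.2 zero_le_one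
  refine le_antisymm ?_ (hT.mem_Icc hx h0).1
  calc T x 0 = T 0 x := hT.comm x 0
    _ ≤ T 0 1 := hT.mono_right h0 hx h1 hx.2
    _ = 0 := by rw [hT.comm, hT.one_left h0]

end IsTNorm

section ResImp

variable {T : ℝ → ℝ → ℝ} {x y l : ℝ}

theorem resImp_mem_Icc (T : ℝ → ℝ → ℝ) (x y : ℝ) : resImp T x y ∈ Icc (0:ℝ) 1 :=
  ⟨Real.sSup_nonneg fun _ hl => hl.1.1, Real.sSup_le (fun _ hl => hl.1.2) zero_le_one⟩

theorem le_resImp (hl : l ∈ Icc (0:ℝ) 1) (h : T x l ≤ y) : l ≤ resImp T x y :=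
  le_csSup ⟨1, fun _ hk => hk.1.2⟩ ⟨hl, h⟩

theorem apply_resImp_le (hT : IsTNorm T) (hLC : LeftContinuousTNorm T) (hx : x ∈ Icc (0:ℝ) 1)
    (hy : 0 ≤ y) : T x (resImp T x y) ≤ y := by
  set S := {l : ℝ | l ∈ Icc (0:ℝ) 1 ∧ T x l ≤ y}
  have hS : S.Nonempty := ⟨0, left_mem_Icc.2 zero_le_one, (hT.zero_right hx).trans_le hy⟩
  have hbdd : BddAbove S := ⟨1, fun _ hl => hl.1.2⟩
  have hcont : ContinuousWithinAt (T x) S (sSup S) :=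
    (hLC x hx _ (resImp_mem_Icc T x y)).mono fun _ hl => le_csSup hbdd hl
  have hclosure : T x (sSup S) ∈ closure (T x '' S) :=
    hcont.mem_closure_image (csSup_mem_closure hS hbdd)
  exact closure_minimal (image_subset_iff.2 fun _ hl => hl.2) isClosed_Iic hclosure

theorem le_resImp_iff (hT : IsTNorm T) (hLC : LeftContinuousTNorm T) (hx : x ∈ Icc (0:ℝ) 1)
    (hy : 0 ≤ y) (hl : l ∈ Icc (0:ℝ) 1) : l ≤ resImp T x y ↔ T x l ≤ y :=
  ⟨fun h => (hT.mono_right hx hl (resImp_mem_Icc T x y) h).trans (apply_resImp_le hT hLC hx hy),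
    le_resImp hl⟩

end ResImp

noncomputable def lowerApprox {U : Type*} (T : ℝ → ℝ → ℝ) (R : U → U → ℝ) (A : U → ℝ) (u : U) :
    ℝ :=
  ⨅ v, resImp T (R v u) (A v)

def IsGranular {U : Type*} (T : ℝ → ℝ → ℝ) (R : U → U → ℝ) (B : U → ℝ) : Prop :=
  ∀ u v, T (R v u) (B u) ≤ B v

section LowerApprox

variable {U : Type*} {T : ℝ → ℝ → ℝ} {R : U → U → ℝ} {A : U → ℝ}

theorem bddBelow_range_resImp (u : U) : BddBelow (range fun v => resImp T (R v u) (A v)) :=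
  ⟨0, forall_mem_range.2 fun _ => (resImp_mem_Icc T _ _).1⟩

theorem lowerApprox_mem_Icc (u : U) : lowerApprox T R A u ∈ Icc (0:ℝ) 1 :=
  ⟨Real.iInf_nonneg fun _ => (resImp_mem_Icc T _ _).1,
    (ciInf_le (bddBelow_range_resImp u) u).trans (resImp_mem_Icc T _ _).2⟩

theorem le_lowerApprox_iff (hT : IsTNorm T) (hLC : LeftContinuousTNorm T)
    (hR : ∀ u v, R u v ∈ Icc (0:ℝ) 1) (hA : ∀ u, 0 ≤ A u) {a : ℝ} (ha : a ∈ Icc (0:ℝ) 1)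
    (u : U) : a ≤ lowerApprox T R A u ↔ ∀ v, T (R v u) a ≤ A v := by
  have : Nonempty U := ⟨u⟩
  rw [lowerApprox, le_ciInf_iff (bddBelow_range_resImp u)]
  exact forall_congr' fun v => le_resImp_iff hT hLC (hR v u) (hA v) ha

theorem lowerApprox_le (hT : IsTNorm T) (hLC : LeftContinuousTNorm T)
    (hR : ∀ u v, R u v ∈ Icc (0:ℝ) 1) (hRrefl : ∀ u, R u u = 1) (hA : ∀ u, 0 ≤ A u) (u : U) :
    lowerApprox T R A u ≤ A u := by
  have h := (le_lowerApprox_iff hT hLC hR hA (lowerApprox_mem_Icc u) u).1 le_rfl u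
  rwa [hRrefl, hT.one_left (lowerApprox_mem_Icc u)] at h

theorem isGranular_lowerApprox (hT : IsTNorm T) (hLC : LeftContinuousTNorm T)
    (hR : ∀ u v, R u v ∈ Icc (0:ℝ) 1) (hRtrans : ∀ u v w, T (R u v) (R v w) ≤ R u w)
    (hA : ∀ u, 0 ≤ A u) : IsGranular T R (lowerApprox T R A) := by
  intro u v
  set a := lowerApprox T R A u
  have ha : a ∈ Icc (0:ℝ) 1 := lowerApprox_mem_Icc u
  rw [le_lowerApprox_iff hT hLC hR hA (hT.mem_Icc (hR v u) ha)]
  intro w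
  calc T (R w v) (T (R v u) a) = T (T (R w v) (R v u)) a := (hT.assoc _ _ _).symm
    _ ≤ T (R w u) a := hT.mono_left (hT.mem_Icc (hR w v) (hR v u)) (hR w u) ha (hRtrans w v u)
    _ ≤ A w := (le_lowerApprox_iff hT hLC hR hA ha u).1 le_rfl w

theorem le_lowerApprox_of_isGranular {B : U → ℝ} (hB : ∀ u, B u ∈ Icc (0:ℝ) 1)
    (hgran : IsGranular T R B) (hBA : B ≤ A) (u : U) : B u ≤ lowerApprox T R A u :=
  have : Nonempty U := ⟨u⟩
  le_ciInf fun v => le_resImp (hB u) ((hgran u v).trans (hBA v))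

end LowerApprox

theorem lower_approximation_largest_granular_general
    (U : Type*)
    (T : ℝ → ℝ → ℝ) (hT : IsTNorm T) (hLC : LeftContinuousTNorm T)
    (R : U → U → ℝ) (hR : ∀ u v, R u v ∈ Icc (0:ℝ) 1)
    (hRrefl : ∀ u, R u u = 1)
    (hRtrans : ∀ u v w, T (R u v) (R v w) ≤ R u w)
    (A : U → ℝ) (hA : ∀ u, A u ∈ Icc (0:ℝ) 1)
    (apr : U → ℝ) (hapr : ∀ u, apr u = ⨅ v, resImp T (R v u) (A v)) :
    (∀ u, apr u ≤ A u) ∧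
    (∀ u v, T (R v u) (apr u) ≤ apr v) ∧
    (∀ B : U → ℝ, (∀ u, B u ∈ Icc (0:ℝ) 1) →
      (∀ u v, T (R v u) (B u) ≤ B v) → (∀ u, B u ≤ A u) → ∀ u, B u ≤ apr u) := by
  obtain rfl : apr = lowerApprox T R A := funext hapr
  have hA₀ : ∀ u, 0 ≤ A u := fun u => (hA u).1
  exact ⟨lowerApprox_le hT hLC hR hRrefl hA₀, isGranular_lowerApprox hT hLC hR hRtrans hA₀,
    fun _ hB hgran hBA => le_lowerApprox_of_isGranular hB hgran hBA⟩

theorem lower_approximation_largest_granular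
    (U : Type*) [Fintype U] [Nonempty U]
    (T : ℝ → ℝ → ℝ) (hT : IsTNorm T) (hLC : LeftContinuousTNorm T)
    (R : U → U → ℝ) (hR : ∀ u v, R u v ∈ Icc (0:ℝ) 1)
    (hRrefl : ∀ u, R u u = 1)
    (hRtrans : ∀ u v w, T (R u v) (R v w) ≤ R u w)
    (A : U → ℝ) (hA : ∀ u, A u ∈ Icc (0:ℝ) 1)
    (apr : U → ℝ) (hapr : ∀ u, apr u = ⨅ v, resImp T (R v u) (A v)) :
    (∀ u, apr u ≤ A u) ∧
    (∀ u v, T (R v u) (apr u) ≤ apr v) ∧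
    (∀ B : U → ℝ, (∀ u, B u ∈ Icc (0:ℝ) 1) →
      (∀ u v, T (R v u) (B u) ≤ B v) → (∀ u, B u ≤ A u) → ∀ u, B u ≤ apr u) :=
  lower_approximation_largest_granular_general U T hT hLC R hR hRrefl hRtrans A hA apr hapr
end

section
/- Let T be a t-norm whose partial mappings y ↦ T(c,y) are convex functions for every fixed c ∈ [0,1] (a D-convex t-norm). Let U be a finite set, R : U × U → [0,1] a fuzzy relation, and for each p ∈ [0,1] let A_p : U → [0,1] be a fuzzy set, such that p ↦ A_p(u) is integrable for each u and T(R(v,u), A_p(u)) ≤ A_p(v) for all u, v ∈ U and all p ∈ [0,1]. Define E(u) = ∫₀¹ A_p(u) dp. Then E is granularly representable: T(R(v,u), E(u)) ≤ E(v) for all u, v ∈ U. -/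
/-!
With `c = R(v,u)`, the map `g = T(c, ·)` is convex and monotone on `[0,1]`, and granularity says
`g (A_p u) ≤ A_p v` for every `p`. Jensen's inequality for the mean `E u = ∫ A_p u dp` gives
`g (E u) ≤ ∫ g (A_p u) dp ≤ E v`. Jensen is proved through a supporting line of `g` at `E u`,
which exists when `E u < 1` because the right slopes of a monotone function are nonnegative.
-/

open Set

open MeasureTheory

theorem ConvexOn.exists_affine_le_of_bddBelow_slope {S : Set ℝ} {g : ℝ → ℝ} {x : ℝ}
    (hg : ConvexOn ℝ S g) (hx : x ∈ S) (hright : ∃ z ∈ S, x < z)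
    (hbdd : BddBelow (slope g x '' {z ∈ S | x < z})) :
    ∃ m, ∀ y ∈ S, g x + m * (y - x) ≤ g y := by
  refine ⟨sInf (slope g x '' {z ∈ S | x < z}), fun y hy => ?_⟩
  rcases lt_trichotomy y x with hyx | rfl | hxy
  · obtain ⟨z, hz, hxz⟩ := hright
    have hslope : slope g x y ≤ sInf (slope g x '' {z ∈ S | x < z}) :=
      le_csInf ⟨_, z, ⟨hz, hxz⟩, rfl⟩ fun _ ⟨w, ⟨hw, hxw⟩, hsw⟩ =>
        hsw ▸ hg.slope_mono hx ⟨hy, hyx.ne⟩ ⟨hw, hxw.ne'⟩ (hyx.trans hxw).le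
    rw [slope_def_field, div_le_iff_of_neg (sub_neg.2 hyx)] at hslope
    linarith
  · simp
  · have hslope : sInf (slope g x '' {z ∈ S | x < z}) ≤ slope g x y :=
      csInf_le hbdd ⟨y, ⟨hy, hxy⟩, rfl⟩
    rw [slope_def_field, le_div_iff₀ (sub_pos.2 hxy)] at hslope
    linarith

theorem ConvexOn.exists_affine_le_of_monotoneOn {S : Set ℝ} {g : ℝ → ℝ} {x : ℝ}
    (hg : ConvexOn ℝ S g) (hmono : MonotoneOn g S) (hx : x ∈ S) (hright : ∃ z ∈ S, x < z) :
    ∃ m, ∀ y ∈ S, g x + m * (y - x) ≤ g y :=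
  hg.exists_affine_le_of_bddBelow_slope hx hright
    ⟨0, fun _ ⟨_, ⟨hz, _⟩, hsz⟩ => hsz ▸ hmono.slope_nonneg hx hz⟩

/-- Unlike `ConvexOn.map_integral_le`, this needs neither continuity of `g` at `b` nor
measurability of `g ∘ f`. -/
theorem ConvexOn.map_integral_le_of_comp_le {α : Type*} [MeasurableSpace α] {μ : Measure α}
    [IsProbabilityMeasure μ] {g : ℝ → ℝ} {a b : ℝ} {f h : α → ℝ}
    (hg : ConvexOn ℝ (Icc a b) g) (hmono : MonotoneOn g (Icc a b))
    (hf_mem : ∀ᵐ p ∂μ, f p ∈ Icc a b) (hf : Integrable f μ) (hh : Integrable h μ)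
    (hgf : ∀ᵐ p ∂μ, g (f p) ≤ h p) :
    g (∫ p, f p ∂μ) ≤ ∫ p, h p ∂μ := by
  have hmean_mem : ∫ p, f p ∂μ ∈ Icc a b :=
    ⟨by simpa using integral_mono_ae (integrable_const a) hf (hf_mem.mono fun _ hp => hp.1),
     by simpa using integral_mono_ae hf (integrable_const b) (hf_mem.mono fun _ hp => hp.2)⟩
  rcases hmean_mem.2.eq_or_lt with hb | hlt
  · -- `g` may jump at `b`, so there is no supporting line there; instead `f = b` a.e.
    have hf_eq : f =ᵐ[μ] fun _ => b :=
      (integral_eq_iff_of_ae_le hf (integrable_const b) (hf_mem.mono fun _ hp => hp.2)).1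
        (by simpa using hb)
    calc g (∫ p, f p ∂μ) = ∫ _, g b ∂μ := by simp [hb]
      _ ≤ ∫ p, h p ∂μ := integral_mono_ae (integrable_const _) hh <|
          (hf_eq.and hgf).mono fun _ ⟨hp, hgp⟩ => by rwa [hp] at hgp
  · set c := ∫ p, f p ∂μ
    obtain ⟨m, hm⟩ := hg.exists_affine_le_of_monotoneOn hmono hmean_mem
      ⟨b, ⟨hmean_mem.1.trans hlt.le, le_rfl⟩, hlt⟩
    have hslope : Integrable (fun p => m * (f p - c)) μ :=
      (hf.sub (integrable_const c)).const_mul m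
    calc g c = ∫ p, (g c + m * (f p - c)) ∂μ := by
          rw [integral_add (integrable_const _) hslope, integral_const_mul,
            integral_sub hf (integrable_const c)]
          simp [c]
      _ ≤ ∫ p, h p ∂μ := integral_mono_ae ((integrable_const _).add hslope) hh <|
          (hf_mem.and hgf).mono fun p ⟨hp, hgp⟩ => (hm _ hp).trans hgp

theorem expectation_granularly_representable_general
    (U : Type*)
    (T : ℝ → ℝ → ℝ) (hT : IsTNorm T)
    (hconv : ∀ c ∈ Icc (0:ℝ) 1, ConvexOn ℝ (Icc (0:ℝ) 1) (fun y => T c y))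
    (R : U → U → ℝ) (hR : ∀ u v, R u v ∈ Icc (0:ℝ) 1)
    (A : ℝ → U → ℝ) (hA : ∀ p ∈ Icc (0:ℝ) 1, ∀ u, A p u ∈ Icc (0:ℝ) 1)
    (hInt : ∀ u, IntervalIntegrable (fun p => A p u) MeasureTheory.volume 0 1)
    (hGran : ∀ p ∈ Icc (0:ℝ) 1, ∀ u v : U, T (R v u) (A p u) ≤ A p v)
    (E : U → ℝ) (hE : ∀ u, E u = ∫ p in (0:ℝ)..1, A p u) :
    ∀ u v : U, T (R v u) (E u) ≤ E v := by
  intro u v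
  have : IsProbabilityMeasure (volume.restrict (Ioc (0:ℝ) 1)) :=
    ⟨by simp [Real.volume_Ioc]⟩
  have hE_Ioc : ∀ w, E w = ∫ p in Ioc (0:ℝ) 1, A p w := fun w => by
    rw [hE w, intervalIntegral.integral_of_le zero_le_one]
  have hmono : MonotoneOn (T (R v u)) (Icc 0 1) := fun _ hy _ hz hyz =>
    hT.2.2.2.1 _ (hR v u) _ hy _ hz hyz
  rw [hE_Ioc u, hE_Ioc v]
  refine (hconv _ (hR v u)).map_integral_le_of_comp_le hmono ?_ (hInt u).1 (hInt v).1 ?_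
  · filter_upwards [ae_restrict_mem measurableSet_Ioc] with p hp
      using hA p (Ioc_subset_Icc_self hp) u
  · filter_upwards [ae_restrict_mem measurableSet_Ioc] with p hp
      using hGran p (Ioc_subset_Icc_self hp) u v

theorem expectation_granularly_representable
    (U : Type*) [Fintype U]
    (T : ℝ → ℝ → ℝ) (hT : IsTNorm T)
    (hconv : ∀ c ∈ Icc (0:ℝ) 1, ConvexOn ℝ (Icc (0:ℝ) 1) (fun y => T c y))
    (R : U → U → ℝ) (hR : ∀ u v, R u v ∈ Icc (0:ℝ) 1)
    (A : ℝ → U → ℝ) (hA : ∀ p ∈ Icc (0:ℝ) 1, ∀ u, A p u ∈ Icc (0:ℝ) 1)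
    (hInt : ∀ u, IntervalIntegrable (fun p => A p u) MeasureTheory.volume 0 1)
    (hGran : ∀ p ∈ Icc (0:ℝ) 1, ∀ u v : U, T (R v u) (A p u) ≤ A p v)
    (E : U → ℝ) (hE : ∀ u, E u = ∫ p in (0:ℝ)..1, A p u) :
    ∀ u v : U, T (R v u) (E u) ≤ E v :=
  expectation_granularly_representable_general U T hT hconv R hR A hA hInt hGran E hE
end
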